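/- Let H be a real Hilbert space with orthonormal basis (Uₖ) consisting of eigenvectors of a positive self-adjoint operator with eigenvalues 0 < α₁ ≤ α₂ ≤ ⋯ . Suppose F : [t₀,∞) → ℝ given by F(t) = Σₖ αₖ⁻¹ |⟨v_t, Uₖ⟩|² satisfies dF/dt = -2 Σₖ ⟨v_t, Uₖ⟩⟨w_t, Uₖ⟩ with ⟨v_t, w_t⟩ ≥ C₂‖v_t‖² for some C₂ > 0, and ‖v_{t₀}‖ < ∞. Then ∫_{t₀}^∞ ‖v_t‖² dt ≤ (2C₂α₁)⁻¹‖v_{t₀}‖², and hence liminf over t of ‖v_t‖ = 0. -/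

import Mathlib

/-!
Parseval turns the derivative of the weighted energy `F t = ∑ α_k⁻¹ ⟪v t, U k⟫²` into
`-2 ⟪v t, w t⟫ ≤ -2 C₂ ‖v t‖²`, so `F` is a nonnegative function dissipating at rate at least
`2 C₂ ‖v t‖²`. Integrating gives `2 C₂ ∫ ‖v‖² ≤ F t₀ ≤ α₀⁻¹ ‖v t₀‖²`, and `‖v t‖ ≥ ε > 0`
for all large `t` would make `F` decrease linearly forever, contradicting `F ≥ 0`.
-/

open scoped RealInnerProductSpace

open MeasureTheory Set Filter

namespace HilbertBasis

variable {ι H : Type*} [NormedAddCommGroup H] [InnerProductSpace ℝ H] (U : HilbertBasis ι ℝ H)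

theorem tsum_real_inner_mul_inner (x y : H) : ∑' k, ⟪x, U k⟫ * ⟪y, U k⟫ = ⟪x, y⟫ := by
  simp_rw [real_inner_comm (U _) y, ← U.tsum_inner_mul_inner x y]

theorem hasSum_inner_sq (x : H) : HasSum (fun k => ⟪x, U k⟫ ^ 2) (‖x‖ ^ 2) := by
  simpa only [real_inner_comm x, ← sq, real_inner_self_eq_norm_sq] using
    U.hasSum_inner_mul_inner x x

theorem tsum_mul_inner_sq_le {β : ι → ℝ} {c : ℝ} (hβ0 : ∀ k, 0 ≤ β k) (hβc : ∀ k, β k ≤ c)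
    (x : H) : ∑' k, β k * ⟪x, U k⟫ ^ 2 ≤ c * ‖x‖ ^ 2 := by
  have hsum := U.hasSum_inner_sq x
  have hle : ∀ k, β k * ⟪x, U k⟫ ^ 2 ≤ c * ⟪x, U k⟫ ^ 2 := fun k =>
    mul_le_mul_of_nonneg_right (hβc k) (sq_nonneg _)
  refine (Summable.tsum_le_tsum hle ?_ (hsum.summable.mul_left c)).trans_eq
    (hsum.mul_left c).tsum_eq
  exact (hsum.summable.mul_left c).of_nonneg_of_le
    (fun k => mul_nonneg (hβ0 k) (sq_nonneg _)) hle

end HilbertBasis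

section EnergyDissipation

variable {F F' g : ℝ → ℝ}

theorem intervalIntegral_le_sub_of_hasDerivAt {a b : ℝ} (hab : a ≤ b)
    (hF : ∀ t ∈ Icc a b, HasDerivAt F (F' t) t) (hg : ∀ t ∈ Ioo a b, g t ≤ -F' t)
    (hint : IntegrableOn g (Icc a b)) : ∫ t in a..b, g t ≤ F a - F b := by
  have := intervalIntegral.integral_le_sub_of_hasDeriv_right_of_le hab
    (fun t ht => (hF t ht).continuousAt.continuousWithinAt.neg)
    (fun t ht => (hF t (Ioo_subset_Icc_self ht)).neg.hasDerivWithinAt) hint hg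
  simpa only [Pi.neg_apply, neg_sub_neg] using this

theorem integral_Ioi_le_of_hasDerivAt {t₀ : ℝ} (hF : ∀ t, t₀ ≤ t → HasDerivAt F (F' t) t)
    (hF0 : ∀ t, t₀ ≤ t → 0 ≤ F t) (hg : ∀ t, t₀ < t → g t ≤ -F' t) :
    ∫ t in Ioi t₀, g t ≤ F t₀ := by
  by_cases hint : IntegrableOn g (Ioi t₀)
  · refine le_of_tendsto (intervalIntegral_tendsto_integral_Ioi t₀ hint tendsto_id) ?_
    filter_upwards [eventually_ge_atTop t₀] with T hT
    calc ∫ t in t₀..T, g t ≤ F t₀ - F T :=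
          intervalIntegral_le_sub_of_hasDerivAt hT (fun t ht => hF t ht.1)
            (fun t ht => hg t ht.1)
            ((integrableOn_Icc_iff_integrableOn_Ioc).2 (hint.mono_set Ioc_subset_Ioi_self))
      _ ≤ F t₀ := by linarith [hF0 T hT]
  · rw [integral_undef hint]
    exact hF0 t₀ le_rfl

theorem frequently_neg_deriv_lt {t₀ : ℝ} (hF : ∀ t, t₀ ≤ t → HasDerivAt F (F' t) t)
    (hF0 : ∀ t, t₀ ≤ t → 0 ≤ F t) {ε : ℝ} (hε : 0 < ε) : ∃ᶠ t in atTop, -F' t < ε := by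
  rw [Filter.frequently_atTop]
  by_contra! h
  obtain ⟨T₁, hT₁⟩ := h
  set T := max T₁ t₀
  have hTt₀ : t₀ ≤ T := le_max_right _ _
  set S := T + F T / ε + 1
  have hTS : T ≤ S := by have := div_nonneg (hF0 T hTt₀) hε.le; linarith
  -- On `[T, S]` the energy drops at rate at least `ε`, which exhausts `F T` before time `S`.
  have hdrop := intervalIntegral_le_sub_of_hasDerivAt (g := fun _ => ε) hTS
    (fun t ht => hF t (hTt₀.trans ht.1))
    (fun t ht => hT₁ t ((le_max_left _ _).trans ht.1.le)) (integrableOn_const (by simp))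
  rw [intervalIntegral.integral_const, smul_eq_mul] at hdrop
  have hS : (S - T) * ε = F T + ε := by
    rw [show S - T = F T / ε + 1 by ring, add_mul, div_mul_cancel₀ _ hε.ne', one_mul]
  linarith [hF0 S (hTt₀.trans hTS)]

end EnergyDissipation

theorem Filter.liminf_eq_zero_of_frequently_lt {ι : Type*} {f : Filter ι} {u : ι → ℝ}
    (h0 : ∀ᶠ i in f, 0 ≤ u i) (h : ∀ ε > 0, ∃ᶠ i in f, u i < ε) : liminf u f = 0 := by
  refine le_antisymm (le_of_forall_pos_le_add fun ε hε => ?_) ?_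
  · exact liminf_le_of_frequently_le ((h ε hε).mono fun _ hi => by linarith)
      (isBoundedUnder_of_eventually_ge h0)
  · exact le_liminf_of_le (IsCoboundedUnder.of_frequently_le
      ((h 1 one_pos).mono fun _ hi => hi.le)) h0

theorem stmt9 {H : Type*} [NormedAddCommGroup H] [InnerProductSpace ℝ H] [CompleteSpace H]
    (U : HilbertBasis ℕ ℝ H) (α : ℕ → ℝ) (hα0 : 0 < α 0) (hαmono : Monotone α)
    (v w : ℝ → H) (t₀ : ℝ) (C₂ : ℝ) (hC₂ : 0 < C₂) (F : ℝ → ℝ)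
    (hF : ∀ t, F t = ∑' k, (α k)⁻¹ * (⟪v t, U k⟫)^2)
    (hderiv : ∀ t, t₀ ≤ t →
      HasDerivAt F (-2 * ∑' k, ⟪v t, U k⟫ * ⟪w t, U k⟫) t)
    (hmono : ∀ t, t₀ ≤ t → C₂ * ‖v t‖^2 ≤ ⟪v t, w t⟫) :
    (∫ t in Set.Ioi t₀, ‖v t‖^2 ≤ (2 * C₂ * α 0)⁻¹ * ‖v t₀‖^2) ∧
    Filter.liminf (fun t => ‖v t‖) Filter.atTop = 0 := by
  have hα : ∀ k, 0 < α k := fun k => hα0.trans_le (hαmono k.zero_le)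
  have hF0 : ∀ t, t₀ ≤ t → 0 ≤ F t := fun t _ =>
    (hF t).symm ▸ tsum_nonneg fun k => mul_nonneg (inv_pos.2 (hα k)).le (sq_nonneg _)
  have hFt₀ : F t₀ ≤ (α 0)⁻¹ * ‖v t₀‖ ^ 2 := (hF t₀).symm ▸
    U.tsum_mul_inner_sq_le (fun k => (inv_pos.2 (hα k)).le)
      (fun k => inv_anti₀ hα0 (hαmono k.zero_le)) (v t₀)
  have hF' : ∀ t, t₀ ≤ t → HasDerivAt F (-2 * ⟪v t, w t⟫) t := fun t ht =>
    U.tsum_real_inner_mul_inner (v t) (w t) ▸ hderiv t ht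
  have hdiss : ∀ t, t₀ ≤ t → 2 * C₂ * ‖v t‖ ^ 2 ≤ -(-2 * ⟪v t, w t⟫) := fun t ht => by
    linarith [hmono t ht]
  refine ⟨?_, liminf_eq_zero_of_frequently_lt (.of_forall fun t => norm_nonneg _) fun ε hε => ?_⟩
  · have hint := integral_Ioi_le_of_hasDerivAt hF' hF0 fun t ht => hdiss t ht.le
    rw [integral_const_mul] at hint
    calc ∫ t in Ioi t₀, ‖v t‖ ^ 2 = (2 * C₂)⁻¹ * (2 * C₂ * ∫ t in Ioi t₀, ‖v t‖ ^ 2) := by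
          field_simp
      _ ≤ (2 * C₂)⁻¹ * ((α 0)⁻¹ * ‖v t₀‖ ^ 2) :=
          mul_le_mul_of_nonneg_left (hint.trans hFt₀) (by positivity)
      _ = (2 * C₂ * α 0)⁻¹ * ‖v t₀‖ ^ 2 := by rw [mul_inv (2 * C₂)]; ring
  · refine (frequently_neg_deriv_lt hF' hF0 (by positivity : 0 < 2 * C₂ * ε ^ 2)).mp ?_
    filter_upwards [eventually_ge_atTop t₀] with t ht hlt
    exact lt_of_pow_lt_pow_left₀ 2 hε.le
      (lt_of_mul_lt_mul_left ((hdiss t ht).trans_lt hlt) (by positivity : (0:ℝ) ≤ 2 * C₂))
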